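/- Let ω⁽⁰⁾ be a sufficiently smooth function of x and define the correctors ω⁽²⁾(x,y) = N₂^{α₁α₂}(y) ∂²ω⁽⁰⁾/∂x_{α₁}∂x_{α₂}, ω⁽³⁾(x,y) = N₃^{α₁α₂α₃}(y) ∂³ω⁽⁰⁾/∂x_{α₁}∂x_{α₂}∂x_{α₃}, and ω⁽⁴⁾(x,y) = N₄^{α₁α₂α₃α₄}(y) ∂⁴ω⁽⁰⁾/∂x_{α₁}∂x_{α₂}∂x_{α₃}∂x_{α₄}, where N₂, N₃, N₄ solve the cell problems. Then the cascade of two-scale equations holds: (i) B₀ω⁽²⁾ + B₂ω⁽⁰⁾ = 0; (ii) B₀ω⁽³⁾ + B₁ω⁽²⁾ + B₃ω⁽⁰⁾ = 0; (iii) B₀ω⁽⁴⁾ + B₁ω⁽³⁾ + B₂ω⁽²⁾ + B₄ω⁽⁰⁾ = D̂_{α₁α₂α₃α₄} ∂⁴ω⁽⁰⁾/∂x_{α₁}∂x_{α₂}∂x_{α₃}∂x_{α₄}. -/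

import Mathlib

open MeasureTheory Set Filter

noncomputable section

/-- Points in the plane `ℝ²`. -/
abbrev Pt := Fin 2 → ℝ

/-- First-order partial derivative in direction `i`. -/
def pd (i : Fin 2) (f : Pt → ℝ) : Pt → ℝ :=
  fun x => fderiv ℝ f x (Pi.single i 1)

/-- Second-order partial derivative. -/
def pd2 (i j : Fin 2) (f : Pt → ℝ) : Pt → ℝ := pd i (pd j f)

def pd3 (i j k : Fin 2) (f : Pt → ℝ) : Pt → ℝ := pd i (pd2 j k f)

def pd4 (i j k l : Fin 2) (f : Pt → ℝ) : Pt → ℝ := pd i (pd3 j k l f)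

/-- The unit periodic cell `Y = [0,1]²`. -/
def Ycell : Set Pt := {y | ∀ i, y i ∈ Icc (0:ℝ) 1}

/-- A fourth-order coefficient tensor field. -/
abbrev Coeff := Fin 2 → Fin 2 → Fin 2 → Fin 2 → Pt → ℝ

/-- 1-periodicity of a scalar function on `ℝ²`. -/
def Per (f : Pt → ℝ) : Prop := ∀ (y : Pt) (z : Fin 2 → ℤ), f (fun m => y m + (z m : ℝ)) = f y

def PerCoeff (D : Coeff) : Prop := ∀ i j k l, Per (D i j k l)

/-- Assumption (A1): the coefficients are (essentially) bounded. -/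
def CoeffBounded (D : Coeff) : Prop := ∀ i j k l, ∃ M : ℝ, ∀ y, |D i j k l y| ≤ M

/-- Assumption (A2): symmetry and uniform ellipticity on symmetric matrices. -/
def SymmElliptic (D : Coeff) (al be : ℝ) : Prop :=
  0 < al ∧ al ≤ be ∧
  (∀ i j k l (y : Pt), D i j k l y = D i j l k y ∧ D i j k l y = D k l i j y) ∧
  ∀ (η : Fin 2 → Fin 2 → ℝ), (∀ i j, η i j = η j i) → ∀ y : Pt,
    al * (∑ i, ∑ j, η i j * η i j) ≤ (∑ i, ∑ j, ∑ k, ∑ l, D i j k l y * η i j * η k l) ∧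
    (∑ i, ∑ j, ∑ k, ∑ l, D i j k l y * η i j * η k l) ≤ be * (∑ i, ∑ j, η i j * η i j)

/-- Membership in `H²(Ω)`: the function together with its first and second partial
derivatives is square-integrable on `Ω`. -/
def MemH2 (Ω : Set Pt) (u : Pt → ℝ) : Prop :=
  MemLp u 2 (volume.restrict Ω) ∧ (∀ i, MemLp (pd i u) 2 (volume.restrict Ω)) ∧
    ∀ i j, MemLp (pd2 i j u) 2 (volume.restrict Ω)

/-- `H₀²(Ω)`: `H²(Ω)` together with the clamped boundary conditions `u = 0`, `∇u = 0`
on `∂Ω`. -/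
def H20 (Ω : Set Pt) : Set (Pt → ℝ) :=
  {u | MemH2 Ω u ∧ ∀ x ∈ frontier Ω, u x = 0 ∧ ∀ i, pd i u x = 0}

/-- The `H²(Ω)`-norm. -/
def H2Norm (Ω : Set Pt) (u : Pt → ℝ) : ℝ :=
  Real.sqrt (∫ x in Ω, (u x ^ 2 + ∑ i, pd i u x ^ 2 + ∑ i, ∑ j, pd2 i j u x ^ 2))

/-- The `H^{-2}(Ω)` (dual) norm of a function regarded as a functional on `H₀²(Ω)`. -/
def Hm2Norm (Ω : Set Pt) (F : Pt → ℝ) : ℝ :=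
  sSup {r : ℝ | ∃ v ∈ H20 Ω, H2Norm Ω v ≤ 1 ∧ r = ∫ x in Ω, F x * v x}

/-- The coefficients at the microscale: `D^ε(x) = D(x/ε)`. -/
def Dscaled (D : Coeff) (ε : ℝ) : Coeff := fun i j k l x => D i j k l (ε⁻¹ • x)

/-- Weak solution of the second-order auxiliary cell problem (16), with clamped
boundary conditions built into membership in `H₀²(Y)`. -/
def CellSol2 (D : Coeff) (a1 a2 : Fin 2) (N : Pt → ℝ) : Prop :=
  N ∈ H20 Ycell ∧ ∀ v ∈ H20 Ycell,
    (∫ y in Ycell, ∑ i, ∑ j, ∑ k, ∑ l, D i j k l y * pd2 k l N y * pd2 i j v y) =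
      -∫ y in Ycell, ∑ i, ∑ j, D i j a1 a2 y * pd2 i j v y

/-- Weak solution of the third-order auxiliary cell problem (19). -/
def CellSol3 (D : Coeff) (N2 : Fin 2 → Fin 2 → Pt → ℝ) (a1 a2 a3 : Fin 2)
    (N : Pt → ℝ) : Prop :=
  N ∈ H20 Ycell ∧ ∀ v ∈ H20 Ycell,
    (∫ y in Ycell, ∑ i, ∑ j, ∑ k, ∑ l, D i j k l y * pd2 k l N y * pd2 i j v y) =
      ∫ y in Ycell,
        (2 * ∑ j, ∑ k, ∑ l, D a1 j k l y * pd2 k l (N2 a2 a3) y * pd j v y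
          - 2 * ∑ i, ∑ j, ∑ l, D i j a1 l y * pd l (N2 a2 a3) y * pd2 i j v y
          + 2 * ∑ i, D i a1 a2 a3 y * pd i v y)

/-- The homogenized bending stiffness coefficients (21); note `|Y| = 1`. -/
def Dhom (D : Coeff) (N2 : Fin 2 → Fin 2 → Pt → ℝ) (i j k l : Fin 2) : ℝ :=
  ∫ y in Ycell, (D i j k l y + ∑ a, ∑ b, D i j a b y * pd2 a b (N2 k l) y)

/-- Weak solution of the fourth-order auxiliary cell problem (24). -/
def CellSol4 (D : Coeff) (N2 : Fin 2 → Fin 2 → Pt → ℝ)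
    (N3 : Fin 2 → Fin 2 → Fin 2 → Pt → ℝ) (a1 a2 a3 a4 : Fin 2) (N : Pt → ℝ) : Prop :=
  N ∈ H20 Ycell ∧ ∀ v ∈ H20 Ycell,
    (∫ y in Ycell, ∑ i, ∑ j, ∑ k, ∑ l, D i j k l y * pd2 k l N y * pd2 i j v y) =
      ∫ y in Ycell,
        ((Dhom D N2 a1 a2 a3 a4 - D a1 a2 a3 a4 y) * v y
          + 2 * ∑ j, ∑ k, ∑ l, D a1 j k l y * pd2 k l (N3 a2 a3 a4) y * pd j v y
          - 2 * ∑ i, ∑ j, ∑ l, D i j a1 l y * pd l (N3 a2 a3 a4) y * pd2 i j v y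
          - (∑ k, ∑ l, D a1 a2 k l y * pd2 k l (N2 a3 a4) y) * v y
          - ∑ i, ∑ j, D i j a1 a2 y * N2 a3 a4 y * pd2 i j v y
          + 4 * ∑ j, ∑ l, D a1 j a2 l y * pd l (N2 a3 a4) y * pd j v y)

/-- Weak solution of the Kirchhoff plate problem with coefficients `A`, load `q` and
prescribed boundary deflection `g1` and normal rotation `g2` (with outward normal
field `nb`). -/
def IsWeakSolution (A : Coeff) (Ω : Set Pt) (q g1 g2 : Pt → ℝ) (nb : Pt → Pt)
    (w : Pt → ℝ) : Prop :=
  MemH2 Ω w ∧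
  (∀ v ∈ H20 Ω,
    (∫ x in Ω, ∑ i, ∑ j, ∑ k, ∑ l, A i j k l x * pd2 k l w x * pd2 i j v x) =
      ∫ x in Ω, q x * v x) ∧
  (∀ x ∈ frontier Ω, w x = g1 x) ∧
  (∀ x ∈ frontier Ω, (∑ j, pd j w x * nb x j) = g2 x)

/-- Assumption (A3) for the boundary data `g₁ ∈ H^{3/2}(∂Ω)`, `g₂ ∈ H^{1/2}(∂Ω)`,
expressed through the existence of an `H²(Ω)`-lift attaining the boundary data. -/
def BoundaryDataLift (Ω : Set Pt) (g1 g2 : Pt → ℝ) (nb : Pt → Pt) : Prop :=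
  ∃ w : Pt → ℝ, MemH2 Ω w ∧ (∀ x ∈ frontier Ω, w x = g1 x) ∧
    (∀ x ∈ frontier Ω, (∑ j, pd j w x * nb x j) = g2 x)

/-- The closed ε-cell `ε(z + Ȳ)`. -/
def cellSet (ε : ℝ) (z : Fin 2 → ℤ) : Set Pt :=
  {x | ∀ i, x i ∈ Icc (ε * (z i : ℝ)) (ε * (z i : ℝ) + ε)}

/-- Assumption (B1): `Ω̄` is a union of integral ε-cells. -/
def Tiles (Ω : Set Pt) (ε : ℝ) : Prop :=
  closure Ω = ⋃ z ∈ {z : Fin 2 → ℤ | cellSet ε z ⊆ closure Ω}, cellSet ε z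

/-- Assumption (B2): the coefficients are piecewise constant on the cell `Y`. -/
def PiecewiseConstOn (D : Coeff) : Prop :=
  ∃ P : Finset (Set Pt), (Ycell ⊆ ⋃ s ∈ P, s) ∧
    ∀ s ∈ P, ∀ i j k l, ∀ y1 ∈ s, ∀ y2 ∈ s, D i j k l y1 = D i j k l y2

/-- Reflection about the middle hyperplane `{y_m = 1/2}` of `Y`. -/
def reflect (m : Fin 2) (y : Pt) : Pt := Function.update y m (1 - y m)

/-- Assumption (B3): the periodic cell is geometrically symmetric with respect to its
two middle hyperplanes. -/
def CellSymmetric (D : Coeff) : Prop :=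
  ∀ m i j k l y, D i j k l (reflect m y) = D i j k l y

/-- Membership in `H^k(Ω)`. -/
def MemHk (k : ℕ) (Ω : Set Pt) (u : Pt → ℝ) : Prop :=
  ∀ n ≤ k, MemLp (fun x => ‖iteratedFDeriv ℝ n u x‖) 2 (volume.restrict Ω)

/-- The fourth-order multi-scale (FOMS) approximate solution (25). -/
def foms (ε : ℝ) (w0 : Pt → ℝ) (N2 : Fin 2 → Fin 2 → Pt → ℝ)
    (N3 : Fin 2 → Fin 2 → Fin 2 → Pt → ℝ)
    (N4 : Fin 2 → Fin 2 → Fin 2 → Fin 2 → Pt → ℝ) : Pt → ℝ := fun x =>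
  w0 x + ε ^ 2 * ∑ a1, ∑ a2, N2 a1 a2 (ε⁻¹ • x) * pd2 a1 a2 w0 x
    + ε ^ 3 * ∑ a1, ∑ a2, ∑ a3, N3 a1 a2 a3 (ε⁻¹ • x) * pd3 a1 a2 a3 w0 x
    + ε ^ 4 * ∑ a1, ∑ a2, ∑ a3, ∑ a4, N4 a1 a2 a3 a4 (ε⁻¹ • x) * pd4 a1 a2 a3 a4 w0 x

/-- Functions of the two scales `(x, y)`. -/
abbrev Fn2 := Pt → Pt → ℝ

/-- Partial derivative in the macroscopic variable `x`. -/
def Dxv (i : Fin 2) (Φ : Fn2) : Fn2 :=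
  fun x y => fderiv ℝ (fun x' => Φ x' y) x (Pi.single i 1)

/-- Partial derivative in the microscopic variable `y`. -/
def Dyv (j : Fin 2) (Φ : Fn2) : Fn2 :=
  fun x y => fderiv ℝ (fun y' => Φ x y') y (Pi.single j 1)

def Ayy (D : Coeff) (i j : Fin 2) (Φ : Fn2) : Fn2 :=
  fun x y => ∑ k, ∑ l, D i j k l y * Dyv k (Dyv l Φ) x y
def Axy (D : Coeff) (i j : Fin 2) (Φ : Fn2) : Fn2 :=
  fun x y => ∑ k, ∑ l, D i j k l y * Dxv k (Dyv l Φ) x y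
def Ayx (D : Coeff) (i j : Fin 2) (Φ : Fn2) : Fn2 :=
  fun x y => ∑ k, ∑ l, D i j k l y * Dyv k (Dxv l Φ) x y
def Axx (D : Coeff) (i j : Fin 2) (Φ : Fn2) : Fn2 :=
  fun x y => ∑ k, ∑ l, D i j k l y * Dxv k (Dxv l Φ) x y

/-- The two-scale operator `B₀` of (4). -/
def B0op (D : Coeff) (Φ : Fn2) : Fn2 :=
  fun x y => ∑ i, ∑ j, Dyv i (Dyv j (Ayy D i j Φ)) x y

/-- The two-scale operator `B₁` of (4). -/
def B1op (D : Coeff) (Φ : Fn2) : Fn2 :=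
  fun x y => ∑ i, ∑ j,
    (2 * Dxv i (Dyv j (Ayy D i j Φ)) x y + 2 * Dyv i (Dyv j (Axy D i j Φ)) x y)

/-- The two-scale operator `B₂` of (4). -/
def B2op (D : Coeff) (Φ : Fn2) : Fn2 :=
  fun x y => ∑ i, ∑ j,
    (Dxv i (Dxv j (Ayy D i j Φ)) x y + Dyv i (Dyv j (Axx D i j Φ)) x y
      + 4 * Dxv i (Dyv j (Axy D i j Φ)) x y)

/-- The two-scale operator `B₃` of (4). -/
def B3op (D : Coeff) (Φ : Fn2) : Fn2 :=
  fun x y => ∑ i, ∑ j,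
    (2 * Dyv i (Dxv j (Axx D i j Φ)) x y + 2 * Dxv i (Dxv j (Ayx D i j Φ)) x y)

/-- The two-scale operator `B₄` of (4). -/
def B4op (D : Coeff) (Φ : Fn2) : Fn2 :=
  fun x y => ∑ i, ∑ j, Dxv i (Dxv j (Axx D i j Φ)) x y

/-- The strong (pointwise) form of the second-order cell problem (16). -/
def CellStrong2 (D : Coeff) (a1 a2 : Fin 2) (N : Pt → ℝ) : Prop :=
  ∀ y, (∑ i, ∑ j, pd2 i j (fun t => ∑ k, ∑ l, D i j k l t * pd2 k l N t) y) =
    -∑ i, ∑ j, pd2 i j (fun t => D i j a1 a2 t) y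

/-- The strong (pointwise) form of the third-order cell problem (19). -/
def CellStrong3 (D : Coeff) (N2 : Fin 2 → Fin 2 → Pt → ℝ) (a1 a2 a3 : Fin 2)
    (N : Pt → ℝ) : Prop :=
  ∀ y, (∑ i, ∑ j, pd2 i j (fun t => ∑ k, ∑ l, D i j k l t * pd2 k l N t) y) =
    -2 * (∑ j, pd j (fun t => ∑ k, ∑ l, D a1 j k l t * pd2 k l (N2 a2 a3) t) y)
      - 2 * (∑ i, ∑ j, pd2 i j (fun t => ∑ l, D i j a1 l t * pd l (N2 a2 a3) t) y)
      - 2 * (∑ i, pd i (fun t => D i a1 a2 a3 t) y)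

/-- The strong (pointwise) form of the fourth-order cell problem (24). -/
def CellStrong4 (D : Coeff) (N2 : Fin 2 → Fin 2 → Pt → ℝ)
    (N3 : Fin 2 → Fin 2 → Fin 2 → Pt → ℝ) (a1 a2 a3 a4 : Fin 2) (N : Pt → ℝ) : Prop :=
  ∀ y, (∑ i, ∑ j, pd2 i j (fun t => ∑ k, ∑ l, D i j k l t * pd2 k l N t) y) =
    Dhom D N2 a1 a2 a3 a4 - D a1 a2 a3 a4 y
      - 2 * (∑ j, pd j (fun t => ∑ k, ∑ l, D a1 j k l t * pd2 k l (N3 a2 a3 a4) t) y)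
      - 2 * (∑ i, ∑ j, pd2 i j (fun t => ∑ l, D i j a1 l t * pd l (N3 a2 a3 a4) t) y)
      - (∑ k, ∑ l, D a1 a2 k l y * pd2 k l (N2 a3 a4) y)
      - (∑ i, ∑ j, pd2 i j (fun t => D i j a1 a2 t * N2 a3 a4 t) y)
      - 4 * (∑ j, pd j (fun t => ∑ l, D a1 j a2 l t * pd l (N2 a3 a4) t) y)

/-- The leading term `ω⁽⁰⁾(x,y) = ω⁽⁰⁾(x)` viewed as a two-scale function. -/
def w0lift (w0 : Pt → ℝ) : Fn2 := fun x _ => w0 x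

/-- The second-order corrector `ω⁽²⁾(x,y) = N₂^{α₁α₂}(y) ∂²ω⁽⁰⁾/∂x_{α₁}∂x_{α₂}`. -/
def w2corr (N2 : Fin 2 → Fin 2 → Pt → ℝ) (w0 : Pt → ℝ) : Fn2 :=
  fun x y => ∑ a1, ∑ a2, N2 a1 a2 y * pd2 a1 a2 w0 x

/-- The third-order corrector `ω⁽³⁾(x,y)`. -/
def w3corr (N3 : Fin 2 → Fin 2 → Fin 2 → Pt → ℝ) (w0 : Pt → ℝ) : Fn2 :=
  fun x y => ∑ a1, ∑ a2, ∑ a3, N3 a1 a2 a3 y * pd3 a1 a2 a3 w0 x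

/-- The fourth-order corrector `ω⁽⁴⁾(x,y)`. -/
def w4corr (N4 : Fin 2 → Fin 2 → Fin 2 → Fin 2 → Pt → ℝ) (w0 : Pt → ℝ) : Fn2 :=
  fun x y => ∑ a1, ∑ a2, ∑ a3, ∑ a4, N4 a1 a2 a3 a4 y * pd4 a1 a2 a3 a4 w0 x


set_option maxHeartbeats 2000000

lemma pd_const (i : Fin 2) (c : ℝ) : pd i (fun _ => c) = fun _ => 0 := by
  funext x; simp [pd]

lemma contDiff_pd {f : Pt → ℝ} (hf : ContDiff ℝ (⊤ : ℕ∞) f) (i : Fin 2) : ContDiff ℝ (⊤ : ℕ∞) (pd i f) :=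
  (hf.fderiv_right (by simp)).clm_apply contDiff_const

section SS
variable {ι : Type*} [Fintype ι]

def SS (f g : ι → Pt → ℝ) : Fn2 := fun x y => ∑ a, f a y * g a x

lemma Dyv_SS (f g : ι → Pt → ℝ) (hf : ∀ a, ContDiff ℝ (⊤ : ℕ∞) (f a)) (j : Fin 2) :
    Dyv j (SS f g) = SS (fun a => pd j (f a)) g := by
  funext x y
  show fderiv ℝ (fun y' => ∑ a, f a y' * g a x) y (Pi.single j 1) = _
  rw [fderiv_fun_sum (fun a _ => (((hf a).differentiable (by simp)) y).mul_const _)]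
  simp only [ContinuousLinearMap.sum_apply, SS]
  refine Finset.sum_congr rfl fun a _ => ?_
  rw [fderiv_mul_const (((hf a).differentiable (by simp)) y)]
  simp [pd, mul_comm]

lemma Dxv_SS (f g : ι → Pt → ℝ) (hg : ∀ a, ContDiff ℝ (⊤ : ℕ∞) (g a)) (i : Fin 2) :
    Dxv i (SS f g) = SS f (fun a => pd i (g a)) := by
  funext x y
  show fderiv ℝ (fun x' => ∑ a, f a y * g a x') x (Pi.single i 1) = _
  rw [fderiv_fun_sum (fun a _ => (((hg a).differentiable (by simp)) x).const_mul _)]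
  simp only [ContinuousLinearMap.sum_apply, SS]
  refine Finset.sum_congr rfl fun a _ => ?_
  rw [fderiv_const_mul (((hg a).differentiable (by simp)) x)]
  simp [pd]

variable (D : Coeff) (f g : ι → Pt → ℝ)

lemma Ayy_SS (i j : Fin 2) (hf : ∀ a, ContDiff ℝ (⊤ : ℕ∞) (f a)) :
    Ayy D i j (SS f g)
      = SS (fun a t => ∑ k, ∑ l, D i j k l t * pd k (pd l (f a)) t) g := by
  funext x y
  have h1 : ∀ l, Dyv l (SS f g) = SS (fun a => pd l (f a)) g := Dyv_SS f g hf
  have h2 : ∀ k l, Dyv k (SS (fun a => pd l (f a)) g)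
      = SS (fun a => pd k (pd l (f a))) g :=
    fun k l => Dyv_SS _ g (fun a => contDiff_pd (hf a) l) k
  simp only [Ayy, h1, h2, SS]
  simp only [Fin.sum_univ_two, Finset.mul_sum, Finset.sum_mul]
  simp only [← Finset.sum_add_distrib]
  exact Finset.sum_congr rfl fun a _ => by ring

lemma Axy_SS (i j : Fin 2) (hf : ∀ a, ContDiff ℝ (⊤ : ℕ∞) (f a))
    (hg : ∀ a, ContDiff ℝ (⊤ : ℕ∞) (g a)) :
    Axy D i j (SS f g)
      = SS (ι := ι × Fin 2) (fun p t => ∑ l, D i j p.2 l t * pd l (f p.1) t)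
          (fun p => pd p.2 (g p.1)) := by
  funext x y
  have h1 : ∀ l, Dyv l (SS f g) = SS (fun a => pd l (f a)) g := Dyv_SS f g hf
  have h2 : ∀ k l, Dxv k (SS (fun a => pd l (f a)) g)
      = SS (fun a => pd l (f a)) (fun a => pd k (g a)) :=
    fun k l => Dxv_SS _ g hg k
  simp only [Axy, h1, h2, SS, Fintype.sum_prod_type]
  simp only [Fin.sum_univ_two, Finset.mul_sum, Finset.sum_mul]
  simp only [← Finset.sum_add_distrib]
  exact Finset.sum_congr rfl fun a _ => by ring

lemma Ayx_SS (i j : Fin 2) (hf : ∀ a, ContDiff ℝ (⊤ : ℕ∞) (f a))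
    (hg : ∀ a, ContDiff ℝ (⊤ : ℕ∞) (g a)) :
    Ayx D i j (SS f g)
      = SS (ι := ι × Fin 2) (fun p t => ∑ k, D i j k p.2 t * pd k (f p.1) t)
          (fun p => pd p.2 (g p.1)) := by
  funext x y
  have h1 : ∀ l, Dxv l (SS f g) = SS f (fun a => pd l (g a)) := Dxv_SS f g hg
  have h2 : ∀ k l, Dyv k (SS f (fun a => pd l (g a)))
      = SS (fun a => pd k (f a)) (fun a => pd l (g a)) :=
    fun k l => Dyv_SS _ _ hf k
  simp only [Ayx, h1, h2, SS, Fintype.sum_prod_type]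
  simp only [Fin.sum_univ_two, Finset.mul_sum, Finset.sum_mul]
  simp only [← Finset.sum_add_distrib]
  exact Finset.sum_congr rfl fun a _ => by ring

lemma Axx_SS (i j : Fin 2) (hg : ∀ a, ContDiff ℝ (⊤ : ℕ∞) (g a)) :
    Axx D i j (SS f g)
      = SS (ι := ι × Fin 2 × Fin 2) (fun p t => D i j p.2.1 p.2.2 t * f p.1 t)
          (fun p => pd p.2.1 (pd p.2.2 (g p.1))) := by
  funext x y
  have h1 : ∀ l, Dxv l (SS f g) = SS f (fun a => pd l (g a)) := Dxv_SS f g hg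
  have h2 : ∀ k l, Dxv k (SS f (fun a => pd l (g a)))
      = SS f (fun a => pd k (pd l (g a))) :=
    fun k l => Dxv_SS _ _ (fun a => contDiff_pd (hg a) l) k
  simp only [Axx, h1, h2, SS, Fintype.sum_prod_type]
  simp only [Fin.sum_univ_two, Finset.mul_sum, Finset.sum_mul]
  simp only [← Finset.sum_add_distrib]
  exact Finset.sum_congr rfl fun a _ => by ring

lemma B0_SS (hD : ∀ i j k l, ContDiff ℝ (⊤ : ℕ∞) (D i j k l))
    (hf : ∀ a, ContDiff ℝ (⊤ : ℕ∞) (f a)) : ∀ x y, B0op D (SS f g) x y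
    = ∑ a, (∑ i, ∑ j,
        pd i (pd j (fun t => ∑ k, ∑ l, D i j k l t * pd k (pd l (f a)) t)) y) * g a x := by
  intro x y
  have hF : ∀ i j a, ContDiff ℝ (⊤ : ℕ∞) (fun t => ∑ k, ∑ l, D i j k l t * pd k (pd l (f a)) t) :=
    fun i j a => ContDiff.sum fun k _ => ContDiff.sum fun l _ =>
      (hD i j k l).mul (contDiff_pd (contDiff_pd (hf a) l) k)
  have hA := fun i j => Ayy_SS D f g i j hf
  have h1 : ∀ (i j jj : Fin 2),
      Dyv jj (SS (fun a t => ∑ k, ∑ l, D i j k l t * pd k (pd l (f a)) t) g)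
        = SS (fun a => pd jj (fun t => ∑ k, ∑ l, D i j k l t * pd k (pd l (f a)) t)) g :=
    fun i j jj => Dyv_SS _ g (fun a => hF i j a) jj
  have h2 : ∀ (i j jj ii : Fin 2),
      Dyv ii (SS (fun a => pd jj (fun t => ∑ k, ∑ l, D i j k l t * pd k (pd l (f a)) t)) g)
        = SS (fun a => pd ii (pd jj (fun t => ∑ k, ∑ l, D i j k l t * pd k (pd l (f a)) t))) g :=
    fun i j jj ii => Dyv_SS _ g (fun a => contDiff_pd (hF i j a) jj) ii
  simp only [B0op, hA, h1, h2, SS]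
  simp only [Fin.sum_univ_two, Finset.mul_sum, Finset.sum_mul]
  simp only [← Finset.sum_add_distrib]
  exact Finset.sum_congr rfl fun a _ => by ring

lemma B1_SS (hD : ∀ i j k l, ContDiff ℝ (⊤ : ℕ∞) (D i j k l))
    (hf : ∀ a, ContDiff ℝ (⊤ : ℕ∞) (f a)) (hg : ∀ a, ContDiff ℝ (⊤ : ℕ∞) (g a)) :
    ∀ x y, B1op D (SS f g) x y
      = ∑ a, ∑ m, (2 * ∑ j, pd j (fun t => ∑ k, ∑ l, D m j k l t * pd k (pd l (f a)) t) y
          + 2 * ∑ i, ∑ j, pd i (pd j (fun t => ∑ l, D i j m l t * pd l (f a) t)) y)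
        * pd m (g a) x := by
  intro x y
  have hF : ∀ i j a, ContDiff ℝ (⊤ : ℕ∞) (fun t => ∑ k, ∑ l, D i j k l t * pd k (pd l (f a)) t) :=
    fun i j a => ContDiff.sum fun k _ => ContDiff.sum fun l _ =>
      (hD i j k l).mul (contDiff_pd (contDiff_pd (hf a) l) k)
  have hT : ∀ i j m a, ContDiff ℝ (⊤ : ℕ∞) (fun t => ∑ l, D i j m l t * pd l (f a) t) :=
    fun i j m a => ContDiff.sum fun l _ => (hD i j m l).mul (contDiff_pd (hf a) l)
  have hA1 := fun i j => Ayy_SS D f g i j hf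
  have hA2 := fun i j => Axy_SS D f g i j hf hg
  have h1 : ∀ (i j jj : Fin 2),
      Dyv jj (SS (fun a t => ∑ k, ∑ l, D i j k l t * pd k (pd l (f a)) t) g)
        = SS (fun a => pd jj (fun t => ∑ k, ∑ l, D i j k l t * pd k (pd l (f a)) t)) g :=
    fun i j jj => Dyv_SS _ g (fun a => hF i j a) jj
  have h2 : ∀ (i j jj ii : Fin 2),
      Dxv ii (SS (fun a => pd jj (fun t => ∑ k, ∑ l, D i j k l t * pd k (pd l (f a)) t)) g)
        = SS (fun a => pd jj (fun t => ∑ k, ∑ l, D i j k l t * pd k (pd l (f a)) t))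
            (fun a => pd ii (g a)) :=
    fun i j jj ii => Dxv_SS _ g hg ii
  have h3 : ∀ (i j jj : Fin 2),
      Dyv jj (SS (ι := ι × Fin 2) (fun p t => ∑ l, D i j p.2 l t * pd l (f p.1) t)
          (fun p => pd p.2 (g p.1)))
        = SS (fun p : ι × Fin 2 => pd jj (fun t => ∑ l, D i j p.2 l t * pd l (f p.1) t))
            (fun p => pd p.2 (g p.1)) :=
    fun i j jj => Dyv_SS _ _ (fun p : ι × Fin 2 => hT i j p.2 p.1) jj
  have h4 : ∀ (i j jj ii : Fin 2),
      Dyv ii (SS (fun p : ι × Fin 2 => pd jj (fun t => ∑ l, D i j p.2 l t * pd l (f p.1) t))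
          (fun p => pd p.2 (g p.1)))
        = SS (fun p : ι × Fin 2 => pd ii (pd jj (fun t => ∑ l, D i j p.2 l t * pd l (f p.1) t)))
            (fun p => pd p.2 (g p.1)) :=
    fun i j jj ii => Dyv_SS _ _ (fun p : ι × Fin 2 => contDiff_pd (hT i j p.2 p.1) jj) ii
  simp only [B1op, hA1, hA2, h1, h2, h3, h4, SS, Fintype.sum_prod_type]
  simp only [Fin.sum_univ_two, Finset.mul_sum, Finset.sum_mul]
  simp only [← Finset.sum_add_distrib]
  exact Finset.sum_congr rfl fun a _ => by ring

lemma B2_SS (hD : ∀ i j k l, ContDiff ℝ (⊤ : ℕ∞) (D i j k l))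
    (hf : ∀ a, ContDiff ℝ (⊤ : ℕ∞) (f a)) (hg : ∀ a, ContDiff ℝ (⊤ : ℕ∞) (g a)) :
    ∀ x y, B2op D (SS f g) x y
      = ∑ a, ∑ m, ∑ n,
          ((∑ k, ∑ l, D m n k l y * pd k (pd l (f a)) y)
            + (∑ i, ∑ j, pd i (pd j (fun t => D i j m n t * f a t)) y)
            + 4 * ∑ j, pd j (fun t => ∑ l, D m j n l t * pd l (f a) t) y)
        * pd m (pd n (g a)) x := by
  intro x y
  have hT : ∀ i j m a, ContDiff ℝ (⊤ : ℕ∞) (fun t => ∑ l, D i j m l t * pd l (f a) t) :=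
    fun i j m a => ContDiff.sum fun l _ => (hD i j m l).mul (contDiff_pd (hf a) l)
  have hM : ∀ i j k l a, ContDiff ℝ (⊤ : ℕ∞) (fun t => D i j k l t * f a t) :=
    fun i j k l a => (hD i j k l).mul (hf a)
  have hA1 := fun i j => Ayy_SS D f g i j hf
  have hA2 := fun i j => Axy_SS D f g i j hf hg
  have hA3 := fun i j => Axx_SS D f g i j hg
  have h1 : ∀ (i j jj : Fin 2),
      Dxv jj (SS (fun a t => ∑ k, ∑ l, D i j k l t * pd k (pd l (f a)) t) g)
        = SS (fun a t => ∑ k, ∑ l, D i j k l t * pd k (pd l (f a)) t)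
            (fun a => pd jj (g a)) :=
    fun i j jj => Dxv_SS _ g hg jj
  have h2 : ∀ (i j jj ii : Fin 2),
      Dxv ii (SS (fun a t => ∑ k, ∑ l, D i j k l t * pd k (pd l (f a)) t)
          (fun a => pd jj (g a)))
        = SS (fun a t => ∑ k, ∑ l, D i j k l t * pd k (pd l (f a)) t)
            (fun a => pd ii (pd jj (g a))) :=
    fun i j jj ii => Dxv_SS _ _ (fun a => contDiff_pd (hg a) jj) ii
  have h3 : ∀ (i j jj : Fin 2),
      Dyv jj (SS (ι := ι × Fin 2 × Fin 2) (fun p t => D i j p.2.1 p.2.2 t * f p.1 t)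
          (fun p => pd p.2.1 (pd p.2.2 (g p.1))))
        = SS (fun p : ι × Fin 2 × Fin 2 => pd jj (fun t => D i j p.2.1 p.2.2 t * f p.1 t))
            (fun p => pd p.2.1 (pd p.2.2 (g p.1))) :=
    fun i j jj => Dyv_SS _ _ (fun p : ι × Fin 2 × Fin 2 => hM i j p.2.1 p.2.2 p.1) jj
  have h4 : ∀ (i j jj ii : Fin 2),
      Dyv ii (SS (fun p : ι × Fin 2 × Fin 2 => pd jj (fun t => D i j p.2.1 p.2.2 t * f p.1 t))
          (fun p => pd p.2.1 (pd p.2.2 (g p.1))))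
        = SS (fun p : ι × Fin 2 × Fin 2 =>
              pd ii (pd jj (fun t => D i j p.2.1 p.2.2 t * f p.1 t)))
            (fun p => pd p.2.1 (pd p.2.2 (g p.1))) :=
    fun i j jj ii => Dyv_SS _ _ (fun p : ι × Fin 2 × Fin 2 => contDiff_pd (hM i j p.2.1 p.2.2 p.1) jj) ii
  have h5 : ∀ (i j jj : Fin 2),
      Dyv jj (SS (ι := ι × Fin 2) (fun p t => ∑ l, D i j p.2 l t * pd l (f p.1) t)
          (fun p => pd p.2 (g p.1)))
        = SS (fun p : ι × Fin 2 => pd jj (fun t => ∑ l, D i j p.2 l t * pd l (f p.1) t))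
            (fun p => pd p.2 (g p.1)) :=
    fun i j jj => Dyv_SS _ _ (fun p : ι × Fin 2 => hT i j p.2 p.1) jj
  have h6 : ∀ (i j jj ii : Fin 2),
      Dxv ii (SS (fun p : ι × Fin 2 => pd jj (fun t => ∑ l, D i j p.2 l t * pd l (f p.1) t))
          (fun p => pd p.2 (g p.1)))
        = SS (fun p : ι × Fin 2 => pd jj (fun t => ∑ l, D i j p.2 l t * pd l (f p.1) t))
            (fun p => pd ii (pd p.2 (g p.1))) :=
    fun i j jj ii => Dxv_SS _ _ (fun p : ι × Fin 2 => contDiff_pd (hg p.1) p.2) ii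
  simp only [B2op, hA1, hA2, hA3, h1, h2, h3, h4, h5, h6, SS, Fintype.sum_prod_type]
  simp only [Fin.sum_univ_two, Finset.mul_sum, Finset.sum_mul]
  simp only [← Finset.sum_add_distrib]
  exact Finset.sum_congr rfl fun a _ => by ring

lemma B3_SS (hD : ∀ i j k l, ContDiff ℝ (⊤ : ℕ∞) (D i j k l))
    (hf : ∀ a, ContDiff ℝ (⊤ : ℕ∞) (f a)) (hg : ∀ a, ContDiff ℝ (⊤ : ℕ∞) (g a)) :
    ∀ x y, B3op D (SS f g) x y
      = ∑ a, ∑ b, ∑ c, ∑ d,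
          (2 * ∑ i, pd i (fun t => D i b c d t * f a t) y
            + 2 * ∑ k, D b c k d y * pd k (f a) y) * pd b (pd c (pd d (g a))) x := by
  intro x y
  have hM : ∀ i j k l a, ContDiff ℝ (⊤ : ℕ∞) (fun t => D i j k l t * f a t) :=
    fun i j k l a => (hD i j k l).mul (hf a)
  have hA3 := fun i j => Axx_SS D f g i j hg
  have hA4 := fun i j => Ayx_SS D f g i j hf hg
  have h1 : ∀ (i j jj : Fin 2),
      Dxv jj (SS (ι := ι × Fin 2 × Fin 2) (fun p t => D i j p.2.1 p.2.2 t * f p.1 t)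
          (fun p => pd p.2.1 (pd p.2.2 (g p.1))))
        = SS (fun p : ι × Fin 2 × Fin 2 => fun t => D i j p.2.1 p.2.2 t * f p.1 t)
            (fun p => pd jj (pd p.2.1 (pd p.2.2 (g p.1)))) :=
    fun i j jj => Dxv_SS _ _ (fun p : ι × Fin 2 × Fin 2 => contDiff_pd (contDiff_pd (hg p.1) p.2.2) p.2.1) jj
  have h2 : ∀ (i j jj ii : Fin 2),
      Dyv ii (SS (fun p : ι × Fin 2 × Fin 2 => fun t => D i j p.2.1 p.2.2 t * f p.1 t)
          (fun p => pd jj (pd p.2.1 (pd p.2.2 (g p.1)))))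
        = SS (fun p : ι × Fin 2 × Fin 2 => pd ii (fun t => D i j p.2.1 p.2.2 t * f p.1 t))
            (fun p => pd jj (pd p.2.1 (pd p.2.2 (g p.1)))) :=
    fun i j jj ii => Dyv_SS _ _ (fun p : ι × Fin 2 × Fin 2 => hM i j p.2.1 p.2.2 p.1) ii
  have h3 : ∀ (i j jj : Fin 2),
      Dxv jj (SS (ι := ι × Fin 2) (fun p t => ∑ k, D i j k p.2 t * pd k (f p.1) t)
          (fun p => pd p.2 (g p.1)))
        = SS (fun p : ι × Fin 2 => fun t => ∑ k, D i j k p.2 t * pd k (f p.1) t)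
            (fun p => pd jj (pd p.2 (g p.1))) :=
    fun i j jj => Dxv_SS _ _ (fun p : ι × Fin 2 => contDiff_pd (hg p.1) p.2) jj
  have h4 : ∀ (i j jj ii : Fin 2),
      Dxv ii (SS (fun p : ι × Fin 2 => fun t => ∑ k, D i j k p.2 t * pd k (f p.1) t)
          (fun p => pd jj (pd p.2 (g p.1))))
        = SS (fun p : ι × Fin 2 => fun t => ∑ k, D i j k p.2 t * pd k (f p.1) t)
            (fun p => pd ii (pd jj (pd p.2 (g p.1)))) :=
    fun i j jj ii => Dxv_SS _ _ (fun p : ι × Fin 2 => contDiff_pd (contDiff_pd (hg p.1) p.2) jj) ii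
  simp only [B3op, hA3, hA4, h1, h2, h3, h4, SS, Fintype.sum_prod_type]
  simp only [Fin.sum_univ_two, Finset.mul_sum, Finset.sum_mul]
  simp only [← Finset.sum_add_distrib]
  exact Finset.sum_congr rfl fun a _ => by ring

lemma B4_SS (hD : ∀ i j k l, ContDiff ℝ (⊤ : ℕ∞) (D i j k l))
    (hf : ∀ a, ContDiff ℝ (⊤ : ℕ∞) (f a)) (hg : ∀ a, ContDiff ℝ (⊤ : ℕ∞) (g a)) :
    ∀ x y, B4op D (SS f g) x y
      = ∑ a, ∑ i, ∑ j, ∑ k, ∑ l,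
          (D i j k l y * f a y) * pd i (pd j (pd k (pd l (g a)))) x := by
  intro x y
  have hA3 := fun i j => Axx_SS D f g i j hg
  have h1 : ∀ (i j jj : Fin 2),
      Dxv jj (SS (ι := ι × Fin 2 × Fin 2) (fun p t => D i j p.2.1 p.2.2 t * f p.1 t)
          (fun p => pd p.2.1 (pd p.2.2 (g p.1))))
        = SS (fun p : ι × Fin 2 × Fin 2 => fun t => D i j p.2.1 p.2.2 t * f p.1 t)
            (fun p => pd jj (pd p.2.1 (pd p.2.2 (g p.1)))) :=
    fun i j jj => Dxv_SS _ _ (fun p : ι × Fin 2 × Fin 2 => contDiff_pd (contDiff_pd (hg p.1) p.2.2) p.2.1) jj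
  have h2 : ∀ (i j jj ii : Fin 2),
      Dxv ii (SS (fun p : ι × Fin 2 × Fin 2 => fun t => D i j p.2.1 p.2.2 t * f p.1 t)
          (fun p => pd jj (pd p.2.1 (pd p.2.2 (g p.1)))))
        = SS (fun p : ι × Fin 2 × Fin 2 => fun t => D i j p.2.1 p.2.2 t * f p.1 t)
            (fun p => pd ii (pd jj (pd p.2.1 (pd p.2.2 (g p.1))))) :=
    fun i j jj ii =>
      Dxv_SS _ _ (fun p : ι × Fin 2 × Fin 2 => contDiff_pd (contDiff_pd (contDiff_pd (hg p.1) p.2.2) p.2.1) jj) ii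
  simp only [B4op, hA3, h1, h2, SS, Fintype.sum_prod_type]
  simp only [Fin.sum_univ_two, Finset.mul_sum, Finset.sum_mul]
  simp only [← Finset.sum_add_distrib]

end SS

/-- **The cascade of two-scale equations.** With `ω⁽⁰⁾` sufficiently smooth and the
correctors `ω⁽²⁾, ω⁽³⁾, ω⁽⁴⁾` built from the cell functions `N₂, N₃, N₄` solving the
auxiliary cell problems, the two-scale equations (8)-(10) hold:
(i) `B₀ω⁽²⁾ + B₂ω⁽⁰⁾ = 0`; (ii) `B₀ω⁽³⁾ + B₁ω⁽²⁾ + B₃ω⁽⁰⁾ = 0`;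
(iii) `B₀ω⁽⁴⁾ + B₁ω⁽³⁾ + B₂ω⁽²⁾ + B₄ω⁽⁰⁾ = D̂_{α₁α₂α₃α₄} ∂⁴ω⁽⁰⁾`. -/

theorem two_scale_cascade
    (D : Coeff) (N2 : Fin 2 → Fin 2 → Pt → ℝ) (N3 : Fin 2 → Fin 2 → Fin 2 → Pt → ℝ)
    (N4 : Fin 2 → Fin 2 → Fin 2 → Fin 2 → Pt → ℝ) (w0 : Pt → ℝ)
    (hD : ∀ i j k l, ContDiff ℝ (⊤ : ℕ∞) (D i j k l))
    (hw0 : ContDiff ℝ (⊤ : ℕ∞) w0)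
    (hN2s : ∀ a1 a2, ContDiff ℝ (⊤ : ℕ∞) (N2 a1 a2))
    (hN3s : ∀ a1 a2 a3, ContDiff ℝ (⊤ : ℕ∞) (N3 a1 a2 a3))
    (hN4s : ∀ a1 a2 a3 a4, ContDiff ℝ (⊤ : ℕ∞) (N4 a1 a2 a3 a4))
    (hN2 : ∀ a1 a2, CellStrong2 D a1 a2 (N2 a1 a2))
    (hN3 : ∀ a1 a2 a3, CellStrong3 D N2 a1 a2 a3 (N3 a1 a2 a3))
    (hN4 : ∀ a1 a2 a3 a4, CellStrong4 D N2 N3 a1 a2 a3 a4 (N4 a1 a2 a3 a4)) :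
    (∀ x y, B0op D (w2corr N2 w0) x y + B2op D (w0lift w0) x y = 0) ∧
    (∀ x y, B0op D (w3corr N3 w0) x y + B1op D (w2corr N2 w0) x y
        + B3op D (w0lift w0) x y = 0) ∧
    (∀ x y, B0op D (w4corr N4 w0) x y + B1op D (w3corr N3 w0) x y
        + B2op D (w2corr N2 w0) x y + B4op D (w0lift w0) x y
      = ∑ a1, ∑ a2, ∑ a3, ∑ a4, Dhom D N2 a1 a2 a3 a4 * pd4 a1 a2 a3 a4 w0 x) := by
  have hf2 : ∀ a : Fin 2 × Fin 2,
      ContDiff ℝ (⊤ : ℕ∞) ((fun a : Fin 2 × Fin 2 => N2 a.1 a.2) a) := fun a => hN2s a.1 a.2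
  have hg2 : ∀ a : Fin 2 × Fin 2,
      ContDiff ℝ (⊤ : ℕ∞) ((fun a : Fin 2 × Fin 2 => pd2 a.1 a.2 w0) a) :=
    fun a => contDiff_pd (contDiff_pd hw0 a.2) a.1
  have hf3 : ∀ a : Fin 2 × Fin 2 × Fin 2,
      ContDiff ℝ (⊤ : ℕ∞) ((fun a : Fin 2 × Fin 2 × Fin 2 => N3 a.1 a.2.1 a.2.2) a) :=
    fun a => hN3s a.1 a.2.1 a.2.2
  have hg3 : ∀ a : Fin 2 × Fin 2 × Fin 2,
      ContDiff ℝ (⊤ : ℕ∞) ((fun a : Fin 2 × Fin 2 × Fin 2 => pd3 a.1 a.2.1 a.2.2 w0) a) :=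
    fun a => contDiff_pd (contDiff_pd (contDiff_pd hw0 a.2.2) a.2.1) a.1
  have hf4 : ∀ a : Fin 2 × Fin 2 × Fin 2 × Fin 2,
      ContDiff ℝ (⊤ : ℕ∞) ((fun a : Fin 2 × Fin 2 × Fin 2 × Fin 2 =>
        N4 a.1 a.2.1 a.2.2.1 a.2.2.2) a) :=
    fun a => hN4s a.1 a.2.1 a.2.2.1 a.2.2.2
  have hone : ∀ a : Fin 1, ContDiff ℝ (⊤ : ℕ∞) ((fun _ : Fin 1 => fun _ : Pt => (1:ℝ)) a) :=
    fun _ => contDiff_const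
  have hwl : ∀ a : Fin 1, ContDiff ℝ (⊤ : ℕ∞) ((fun _ : Fin 1 => w0) a) := fun _ => hw0
  have e2 : w2corr N2 w0
      = SS (fun a : Fin 2 × Fin 2 => N2 a.1 a.2) (fun a => pd2 a.1 a.2 w0) := by
    funext x y; simp [w2corr, SS, Fintype.sum_prod_type]
  have e3 : w3corr N3 w0
      = SS (fun a : Fin 2 × Fin 2 × Fin 2 => N3 a.1 a.2.1 a.2.2)
          (fun a => pd3 a.1 a.2.1 a.2.2 w0) := by
    funext x y; simp [w3corr, SS, Fintype.sum_prod_type]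
  have e4 : w4corr N4 w0
      = SS (fun a : Fin 2 × Fin 2 × Fin 2 × Fin 2 => N4 a.1 a.2.1 a.2.2.1 a.2.2.2)
          (fun a => pd4 a.1 a.2.1 a.2.2.1 a.2.2.2 w0) := by
    funext x y; simp [w4corr, SS, Fintype.sum_prod_type]
  have e0 : w0lift w0 = SS (fun _ : Fin 1 => fun _ : Pt => (1:ℝ)) (fun _ => w0) := by
    funext x y; simp [w0lift, SS, Fin.sum_univ_one]
  refine ⟨fun x y => ?_, fun x y => ?_, fun x y => ?_⟩
  · have h := fun a b => hN2 a b y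
    rw [e2, e0, B0_SS D _ _ hD hf2 x y, B2_SS D _ _ hD hone hwl x y]
    simp only [pd2, Fin.sum_univ_two] at h
    simp only [pd2, Fintype.sum_prod_type, Fin.sum_univ_two, Fin.sum_univ_one, pd_const,
      mul_one, one_mul, mul_zero, zero_mul, Finset.sum_const_zero, add_zero, zero_add]
    linear_combination pd 0 (pd 0 w0) x * h 0 0 + pd 0 (pd 1 w0) x * h 0 1
      + pd 1 (pd 0 w0) x * h 1 0 + pd 1 (pd 1 w0) x * h 1 1
  · have h := fun a b c => hN3 a b c y
    rw [e3, e2, e0, B0_SS D _ _ hD hf3 x y, B1_SS D _ _ hD hf2 hg2 x y,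
      B3_SS D _ _ hD hone hwl x y]
    simp only [pd2, pd3, Fin.sum_univ_two] at h
    simp only [pd2, pd3, Fintype.sum_prod_type, Fin.sum_univ_two, Fin.sum_univ_one, pd_const,
      mul_one, one_mul, mul_zero, zero_mul, Finset.sum_const_zero, add_zero, zero_add]
    linear_combination
        pd 0 (pd 0 (pd 0 w0)) x * h 0 0 0 + pd 0 (pd 0 (pd 1 w0)) x * h 0 0 1
      + pd 0 (pd 1 (pd 0 w0)) x * h 0 1 0 + pd 0 (pd 1 (pd 1 w0)) x * h 0 1 1
      + pd 1 (pd 0 (pd 0 w0)) x * h 1 0 0 + pd 1 (pd 0 (pd 1 w0)) x * h 1 0 1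
      + pd 1 (pd 1 (pd 0 w0)) x * h 1 1 0 + pd 1 (pd 1 (pd 1 w0)) x * h 1 1 1
  · have h := fun a b c d => hN4 a b c d y
    rw [e4, e3, e2, e0, B0_SS D _ _ hD hf4 x y, B1_SS D _ _ hD hf3 hg3 x y,
      B2_SS D _ _ hD hf2 hg2 x y, B4_SS D _ _ hD hone hwl x y]
    simp only [pd2, pd3, pd4, Fin.sum_univ_two] at h
    simp only [pd2, pd3, pd4, Fintype.sum_prod_type, Fin.sum_univ_two, Fin.sum_univ_one,
      pd_const, mul_one, one_mul, mul_zero, zero_mul, Finset.sum_const_zero, add_zero, zero_add]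
    linear_combination
        pd 0 (pd 0 (pd 0 (pd 0 w0))) x * h 0 0 0 0 + pd 0 (pd 0 (pd 0 (pd 1 w0))) x * h 0 0 0 1
      + pd 0 (pd 0 (pd 1 (pd 0 w0))) x * h 0 0 1 0 + pd 0 (pd 0 (pd 1 (pd 1 w0))) x * h 0 0 1 1
      + pd 0 (pd 1 (pd 0 (pd 0 w0))) x * h 0 1 0 0 + pd 0 (pd 1 (pd 0 (pd 1 w0))) x * h 0 1 0 1
      + pd 0 (pd 1 (pd 1 (pd 0 w0))) x * h 0 1 1 0 + pd 0 (pd 1 (pd 1 (pd 1 w0))) x * h 0 1 1 1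
      + pd 1 (pd 0 (pd 0 (pd 0 w0))) x * h 1 0 0 0 + pd 1 (pd 0 (pd 0 (pd 1 w0))) x * h 1 0 0 1
      + pd 1 (pd 0 (pd 1 (pd 0 w0))) x * h 1 0 1 0 + pd 1 (pd 0 (pd 1 (pd 1 w0))) x * h 1 0 1 1
      + pd 1 (pd 1 (pd 0 (pd 0 w0))) x * h 1 1 0 0 + pd 1 (pd 1 (pd 0 (pd 1 w0))) x * h 1 1 0 1
      + pd 1 (pd 1 (pd 1 (pd 0 w0))) x * h 1 1 1 0 + pd 1 (pd 1 (pd 1 (pd 1 w0))) x * h 1 1 1 1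


end
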